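/- arXiv:2311.12044 — 2 statements merged into one kernel-verified Lean document; each statement's English description precedes it below -/
import Mathlib

section
/- Let K be a number field, P̃ a prime ideal of O_K above 2, and set e = ord_P̃(2). Let n be a positive integer and p a rational prime with p > 5e, ord_𝔮(n) < p for every prime 𝔮 of O_K dividing n, and ord_P̃(n) ≠ 5e. Let (a, b, c) ∈ O_K³ be a non-trivial primitive solution of x⁴ − y⁴ = n z^p with c ∈ P̃ and ord_P̃(a² + b²) = e, and let j = 2⁶ (a² + 3b²)³ (3a² + b²)³ / (n² c^{2p} (a² − b²)²) ∈ K be the j-invariant of the Frey curve y² = x(x + (a + b)²)(x − (a − b)²). Then ord_P̃(j) = 20e − 4·ord_P̃(n) − 4p·ord_P̃(c); in particular ord_P̃(j) < 0 and p does not divide ord_P̃(j). -/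
/-!
Put `S = a² + b²` and `D = a² - b²`, so that `D S = n cᵖ`. Then `ord D = ord n + p ord c - e`,
which exceeds `2e = ord(2S)` because `p > 5e` and `c ∈ P̃`. Hence in
`(a² + 3b²)(3a² + b²) = (2S)² - D²` the first square dominates, the numerator of `j` has
valuation `6e + 3 · 4e`, and the formula for `ord j` follows. It is negative as `p ord c ≥ p > 5e`,
and `ord j ≡ 4 (5e - ord n) (mod p)` with `0 < |5e - ord n| < p` and `p > 5`.
-/

open NumberField IsDedekindDomain

/-- The `v`-adic valuation `ord_v(x) ∈ ℤ` of an element `x` of a number field `K`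
(with junk value `0` at `x = 0`). -/
noncomputable def ordK {K : Type*} [Field K] [NumberField K]
    (v : HeightOneSpectrum (𝓞 K)) (x : K) : ℤ :=
  open scoped Classical in
  if hx : x = 0 then 0
  else -(Multiplicative.toAdd (WithZero.unzero ((v.valuation K).ne_zero_iff.mpr hx)))

/-- `x ∈ K^×` is an `S`-unit: `ord_𝔭(x) = 0` for all primes `𝔭 ∉ S`. -/
def IsSUnit {K : Type*} [Field K] [NumberField K]
    (S : Set (HeightOneSpectrum (𝓞 K))) (x : K) : Prop :=
  x ≠ 0 ∧ ∀ v ∉ S, ordK v x = 0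

def freyJInvariant {K : Type*} [Field K] (a b c n : K) (p : ℕ) : K :=
  2 ^ 6 * (a ^ 2 + 3 * b ^ 2) ^ 3 * (3 * a ^ 2 + b ^ 2) ^ 3 /
    (n ^ 2 * c ^ (2 * p) * (a ^ 2 - b ^ 2) ^ 2)

section ordK

variable {K : Type*} [Field K] [NumberField K] (v : HeightOneSpectrum (𝓞 K))

lemma ordK_eq_neg_log (x : K) : ordK v x = -WithZero.log (v.valuation K x) := by
  rcases eq_or_ne x 0 with rfl | hx
  · simp [ordK]
  · rw [ordK, dif_neg hx, WithZero.toAdd_unzero_eq_log]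

lemma ordK_mul {x y : K} (hx : x ≠ 0) (hy : y ≠ 0) :
    ordK v (x * y) = ordK v x + ordK v y := by
  simp only [ordK_eq_neg_log, map_mul,
    WithZero.log_mul ((v.valuation K).ne_zero_iff.mpr hx) ((v.valuation K).ne_zero_iff.mpr hy)]
  ring

lemma ordK_div {x y : K} (hx : x ≠ 0) (hy : y ≠ 0) :
    ordK v (x / y) = ordK v x - ordK v y := by
  simp only [ordK_eq_neg_log, map_div₀,
    WithZero.log_div ((v.valuation K).ne_zero_iff.mpr hx) ((v.valuation K).ne_zero_iff.mpr hy)]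
  ring

lemma ordK_pow (x : K) (k : ℕ) : ordK v (x ^ k) = k * ordK v x := by
  simp [ordK_eq_neg_log, WithZero.log_pow]

lemma ordK_sub_eq_left_of_lt {x y : K} (hx : x ≠ 0) (h : ordK v x < ordK v y) :
    ordK v (x - y) = ordK v x := by
  rcases eq_or_ne y 0 with rfl | hy
  · rw [sub_zero]
  rw [ordK_eq_neg_log, ordK_eq_neg_log, neg_lt_neg_iff,
    WithZero.log_lt_log ((v.valuation K).ne_zero_iff.mpr hy)
      ((v.valuation K).ne_zero_iff.mpr hx)] at h
  rw [ordK_eq_neg_log, ordK_eq_neg_log, Valuation.map_sub_eq_of_lt_left _ h]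

lemma sub_ne_zero_of_ordK_lt {x y : K} (h : ordK v x < ordK v y) : x - y ≠ 0 :=
  sub_ne_zero.mpr fun hxy => h.ne (congrArg _ hxy)

lemma ordK_coe_nonneg (x : 𝓞 K) : 0 ≤ ordK v (x : K) := by
  rcases eq_or_ne x 0 with rfl | hx
  · simp [ordK]
  rw [ordK_eq_neg_log, neg_nonneg, WithZero.log_le_iff_le_exp (by simpa using hx)]
  exact v.valuation_le_one x

lemma ordK_coe_eq_zero_of_notMem {x : 𝓞 K} (hx : x ∉ v.asIdeal) : ordK v (x : K) = 0 := by
  rw [ordK_eq_neg_log, (v.valuation_eq_one_iff_notMem).mpr hx, WithZero.log_one, neg_zero]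

lemma ordK_coe_pos_iff {x : 𝓞 K} (hx : x ≠ 0) : 0 < ordK v (x : K) ↔ x ∈ v.asIdeal := by
  rw [ordK_eq_neg_log, neg_pos, WithZero.log_lt_iff_lt_exp (by simpa using hx)]
  exact v.valuation_lt_one_iff_mem x

lemma ordK_freyJInvariant {a b c n : K} {p : ℕ} (hn : n ≠ 0) (hc : c ≠ 0)
    (habc : (a ^ 2 - b ^ 2) * (a ^ 2 + b ^ 2) = n * c ^ p)
    (hab : ordK v (a ^ 2 + b ^ 2) = ordK v 2)
    (hlt : 3 * ordK v 2 < ordK v n + p * ordK v c) :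
    ordK v (freyJInvariant a b c n p) = 20 * ordK v 2 - 4 * ordK v n - 4 * p * ordK v c := by
  obtain ⟨hD0, hS0⟩ := mul_ne_zero_iff.mp (habc ▸ mul_ne_zero hn (pow_ne_zero p hc))
  have hD : ordK v (a ^ 2 - b ^ 2) = ordK v n + p * ordK v c - ordK v 2 := by
    have := congrArg (ordK v) habc
    rw [ordK_mul v hD0 hS0, ordK_mul v hn (pow_ne_zero p hc), ordK_pow, hab] at this
    omega
  have h2S : ordK v (2 * (a ^ 2 + b ^ 2)) = 2 * ordK v 2 := by
    rw [ordK_mul v two_ne_zero hS0, hab]; ring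
  have hXY : (a ^ 2 + 3 * b ^ 2) * (3 * a ^ 2 + b ^ 2)
      = (2 * (a ^ 2 + b ^ 2)) ^ 2 - (a ^ 2 - b ^ 2) ^ 2 := by ring
  have hsq : ordK v ((2 * (a ^ 2 + b ^ 2)) ^ 2) < ordK v ((a ^ 2 - b ^ 2) ^ 2) := by
    simp only [ordK_pow, h2S, hD]; push_cast; omega
  have hXY0 : (a ^ 2 + 3 * b ^ 2) * (3 * a ^ 2 + b ^ 2) ≠ 0 :=
    hXY ▸ sub_ne_zero_of_ordK_lt v hsq
  have hordXY : ordK v ((a ^ 2 + 3 * b ^ 2) * (3 * a ^ 2 + b ^ 2)) = 4 * ordK v 2 := by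
    rw [hXY, ordK_sub_eq_left_of_lt v (pow_ne_zero 2 (mul_ne_zero two_ne_zero hS0)) hsq, ordK_pow, h2S]
    push_cast; ring
  rw [freyJInvariant, mul_assoc, ← mul_pow,
    ordK_div v (mul_ne_zero (by norm_num) (pow_ne_zero 3 hXY0)) (by simp [*]),
    ordK_mul v (by norm_num) (pow_ne_zero 3 hXY0), ordK_mul v (by simp [*]) (by simp [*]),
    ordK_mul v (by simp [*]) (by simp [*])]
  simp only [ordK_pow, hordXY, hD]
  push_cast
  ring

end ordK

lemma not_dvd_four_mul_add_mul {p : ℕ} (hp : p.Prime) (hp4 : 4 < p) {t : ℤ} (ht : t ≠ 0)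
    (htp : |t| < p) (C : ℤ) : ¬ (p : ℤ) ∣ 4 * t + p * C := by
  intro h
  have h4t : (p : ℤ) ∣ 4 * t := (dvd_add_left (dvd_mul_right _ _)).mp h
  rcases (Nat.prime_iff_prime_int.mp hp).dvd_mul.mp h4t with h4 | hpt
  · have := Int.le_of_dvd (by norm_num) h4
    omega
  · exact ht (Int.eq_zero_of_abs_lt_dvd hpt htp)

theorem valuation_of_j_invariant_of_Frey_curve_general
    (K : Type*) [Field K] [NumberField K]
    (Pt : HeightOneSpectrum (𝓞 K)) (hPt2 : (2 : 𝓞 K) ∈ Pt.asIdeal)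
    (e : ℤ) (he : e = ordK Pt (2 : K))
    (n : ℕ) (hn : 0 < n) (p : ℕ) (hp : p.Prime)
    (hp5e : (p : ℤ) > 5 * e)
    (hnord : ∀ q : HeightOneSpectrum (𝓞 K), (n : 𝓞 K) ∈ q.asIdeal →
      ordK q (n : K) < (p : ℤ))
    (hn5e : ordK Pt (n : K) ≠ 5 * e)
    (a b c : 𝓞 K) (heq : a ^ 4 - b ^ 4 = (n : 𝓞 K) * c ^ p)
    (hnontriv : a * b * c ≠ 0)
    (hc : c ∈ Pt.asIdeal)
    (hab : ordK Pt ((a : K) ^ 2 + (b : K) ^ 2) = e)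
    (j : K)
    (hj : j = 2 ^ 6 * ((a : K) ^ 2 + 3 * (b : K) ^ 2) ^ 3 *
      (3 * (a : K) ^ 2 + (b : K) ^ 2) ^ 3 /
      ((n : K) ^ 2 * (c : K) ^ (2 * p) * ((a : K) ^ 2 - (b : K) ^ 2) ^ 2)) :
    ordK Pt j = 20 * e - 4 * ordK Pt (n : K) - 4 * (p : ℤ) * ordK Pt (c : K) ∧
    ordK Pt j < 0 ∧ ¬ ((p : ℤ) ∣ ordK Pt j) := by
  have hcK : (c : K) ≠ 0 := by exact_mod_cast right_ne_zero_of_mul hnontriv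
  have hnK : (n : K) ≠ 0 := Nat.cast_ne_zero.mpr hn.ne'
  have habc : ((a : K) ^ 2 - (b : K) ^ 2) * ((a : K) ^ 2 + (b : K) ^ 2) = n * (c : K) ^ p := by
    have := congrArg ((↑) : 𝓞 K → K) heq
    push_cast at this
    linear_combination this
  have he0 : 0 < e := by
    rw [he]; exact_mod_cast (ordK_coe_pos_iff Pt two_ne_zero).mpr hPt2
  have hC : 1 ≤ ordK Pt (c : K) := (ordK_coe_pos_iff Pt (by exact_mod_cast hcK)).mpr hc
  have hN0 : 0 ≤ ordK Pt (n : K) := by exact_mod_cast ordK_coe_nonneg Pt (n : 𝓞 K)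
  have hNp : ordK Pt (n : K) < p := by
    by_cases hmem : (n : 𝓞 K) ∈ Pt.asIdeal
    · exact hnord Pt hmem
    · have := ordK_coe_eq_zero_of_notMem Pt hmem
      push_cast at this
      omega
  have hpC : (p : ℤ) ≤ p * ordK Pt (c : K) := le_mul_of_one_le_right (by positivity) hC
  have hJ : ordK Pt j = 20 * e - 4 * ordK Pt (n : K) - 4 * (p : ℤ) * ordK Pt (c : K) := by
    rw [hj, he]
    exact ordK_freyJInvariant Pt hnK hcK habc (hab.trans he) (by rw [← he]; linarith)
  refine ⟨hJ, by rw [hJ]; linarith, ?_⟩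
  rw [hJ, show 20 * e - 4 * ordK Pt (n : K) - 4 * (p : ℤ) * ordK Pt (c : K)
    = 4 * (5 * e - ordK Pt (n : K)) + p * (-4 * ordK Pt (c : K)) by ring]
  exact not_dvd_four_mul_add_mul hp (by omega) (sub_ne_zero.mpr hn5e.symm)
    (abs_lt.mpr ⟨by omega, by omega⟩) _

theorem valuation_of_j_invariant_of_Frey_curve
    (K : Type*) [Field K] [NumberField K]
    (Pt : HeightOneSpectrum (𝓞 K)) (hPt2 : (2 : 𝓞 K) ∈ Pt.asIdeal)
    (e : ℤ) (he : e = ordK Pt (2 : K))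
    (n : ℕ) (hn : 0 < n) (p : ℕ) (hp : p.Prime)
    (hp5e : (p : ℤ) > 5 * e)
    (hnord : ∀ q : HeightOneSpectrum (𝓞 K), (n : 𝓞 K) ∈ q.asIdeal →
      ordK q (n : K) < (p : ℤ))
    (hn5e : ordK Pt (n : K) ≠ 5 * e)
    (a b c : 𝓞 K) (heq : a ^ 4 - b ^ 4 = (n : 𝓞 K) * c ^ p)
    (hnontriv : a * b * c ≠ 0) (hprim : Ideal.span {a, b, c} = ⊤)
    (hc : c ∈ Pt.asIdeal)
    (hab : ordK Pt ((a : K) ^ 2 + (b : K) ^ 2) = e)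
    (j : K)
    (hj : j = 2 ^ 6 * ((a : K) ^ 2 + 3 * (b : K) ^ 2) ^ 3 *
      (3 * (a : K) ^ 2 + (b : K) ^ 2) ^ 3 /
      ((n : K) ^ 2 * (c : K) ^ (2 * p) * ((a : K) ^ 2 - (b : K) ^ 2) ^ 2)) :
    ordK Pt j = 20 * e - 4 * ordK Pt (n : K) - 4 * (p : ℤ) * ordK Pt (c : K) ∧
    ordK Pt j < 0 ∧ ¬ ((p : ℤ) ∣ ordK Pt j) :=
  valuation_of_j_invariant_of_Frey_curve_general K Pt hPt2 e he n hn p hp hp5e hnord hn5e a b c heq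
    hnontriv hc hab j hj
end

section
/- Let K be a number field in which 2 is either inert or totally ramified, let P be the unique prime ideal of O_K above 2, and let S = {P}. For every solution (λ, μ) of the S-unit equation λ + μ = 1 there exists a solution (λ', μ') of the S-unit equation such that λ' ∈ O_K, μ' is a unit of O_K, and max{|ord_P(λ')|, |ord_P(μ')|} = max{|ord_P(λ)|, |ord_P(μ)|}. -/
open NumberField IsDedekindDomain

/-! Write `a = ord_P λ`, `b = ord_P μ`. The ultrametric inequality applied to `λ + μ = 1`,
`μ = 1 - λ` and `λ = 1 - μ` leaves three cases: `a = b < 0`; `a ≥ 0 = b`; `a = 0 ≤ b`.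
In the first case `(λ⁻¹, -μ/λ)` is again a solution, with valuations `-a` and `0`; in the
others `(λ, μ)` or `(μ, λ)` already works. For `S = {P}`, an `S`-unit with nonnegative
valuation at `P` is integral, and one with valuation `0` at `P` is a unit. -/

section

variable {K : Type*} [Field K] [NumberField K] (v : HeightOneSpectrum (𝓞 K))

@[simp] lemma ordK_one : ordK v (1 : K) = 0 := by simp [ordK_eq_neg_log]

@[simp] lemma ordK_neg (x : K) : ordK v (-x) = ordK v x := by simp [ordK_eq_neg_log]

@[simp] lemma ordK_inv (x : K) : ordK v x⁻¹ = -ordK v x := by simp [ordK_eq_neg_log]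

lemma ordK_nonneg_iff (x : K) : 0 ≤ ordK v x ↔ v.valuation K x ≤ 1 := by
  by_cases hx : x = 0
  · simp [ordK, hx]
  · rw [ordK_eq_neg_log, neg_nonneg, WithZero.log_le_iff_le_exp (by simpa using hx)]
    rfl

lemma min_ordK_le_ordK_add {x y : K} (hxy : x + y ≠ 0) :
    min (ordK v x) (ordK v y) ≤ ordK v (x + y) := by
  have hv : v.valuation K (x + y) ≠ 0 := by simpa using hxy
  rcases le_max_iff.1 ((v.valuation K).map_add x y) with h | h
  · have hx : v.valuation K x ≠ 0 := ne_bot_of_le_ne_bot hv h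
    simpa [ordK_eq_neg_log, WithZero.log_le_log hv hx] using Or.inl h
  · have hy : v.valuation K y ≠ 0 := ne_bot_of_le_ne_bot hv h
    simpa [ordK_eq_neg_log, WithZero.log_le_log hv hy] using Or.inr h

lemma min_ordK_le_ordK_sub {x y : K} (hxy : x - y ≠ 0) :
    min (ordK v x) (ordK v y) ≤ ordK v (x - y) := by
  rw [sub_eq_add_neg] at hxy ⊢
  simpa using min_ordK_le_ordK_add v hxy

lemma ordK_cases_of_add_eq_one {lam mu : K} (hl : lam ≠ 0) (hm : mu ≠ 0) (h : lam + mu = 1) :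
    (ordK v lam < 0 ∧ ordK v mu = ordK v lam) ∨ (0 ≤ ordK v lam ∧ ordK v mu = 0) ∨
      (ordK v lam = 0 ∧ 0 ≤ ordK v mu) := by
  have h₁ := min_ordK_le_ordK_add v (x := lam) (y := mu) (by simp [h])
  have h₂ := min_ordK_le_ordK_sub v (x := 1) (y := mu) (by rwa [← eq_sub_of_add_eq h])
  have h₃ := min_ordK_le_ordK_sub v (x := 1) (y := lam) (by rwa [← eq_sub_of_add_eq' h])
  rw [h, ordK_one] at h₁
  rw [← eq_sub_of_add_eq h, ordK_one] at h₂
  rw [← eq_sub_of_add_eq' h, ordK_one] at h₃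
  omega

end

namespace IsSUnit

variable {K : Type*} [Field K] [NumberField K]

section

variable {S : Set (HeightOneSpectrum (𝓞 K))} {x y : K}

lemma inv (hx : IsSUnit S x) : IsSUnit S x⁻¹ :=
  ⟨inv_ne_zero hx.1, fun v hv => by rw [ordK_inv, hx.2 v hv, neg_zero]⟩

lemma neg (hx : IsSUnit S x) : IsSUnit S (-x) :=
  ⟨neg_ne_zero.2 hx.1, fun v hv => by rw [ordK_neg, hx.2 v hv]⟩

lemma mul (hx : IsSUnit S x) (hy : IsSUnit S y) : IsSUnit S (x * y) :=
  ⟨mul_ne_zero hx.1 hy.1, fun v hv => by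
    rw [ordK_mul v hx.1 hy.1, hx.2 v hv, hy.2 v hv, add_zero]⟩

end

variable {P : HeightOneSpectrum (𝓞 K)} {x : K}

lemma exists_integer (hx : IsSUnit {P} x) (h : 0 ≤ ordK P x) : ∃ y : 𝓞 K, (y : K) = x := by
  refine HeightOneSpectrum.mem_integers_of_valuation_le_one K x
    fun v => (ordK_nonneg_iff v x).1 ?_
  by_cases hv : v = P
  · rwa [hv]
  · rw [hx.2 v hv]

lemma exists_unit (hx : IsSUnit {P} x) (h : ordK P x = 0) :
    ∃ u : (𝓞 K)ˣ, ((u : 𝓞 K) : K) = x := by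
  obtain ⟨y, hy⟩ := hx.exists_integer h.ge
  obtain ⟨z, hz⟩ := hx.inv.exists_integer (by rw [ordK_inv, h, neg_zero])
  have hyz : y * z = 1 := RingOfIntegers.coe_injective (by simp [hy, hz, hx.1])
  exact ⟨Units.mkOfMulEqOne y z hyz, hy⟩

end IsSUnit

theorem S_unit_solution_normalisation_inert_or_totally_ramified_general
    (K : Type*) [Field K] [NumberField K]
    (P : HeightOneSpectrum (𝓞 K)) :
    ∀ lam mu : K, IsSUnit {P} lam → IsSUnit {P} mu → lam + mu = 1 →
      ∃ lam' mu' : K, IsSUnit {P} lam' ∧ IsSUnit {P} mu' ∧ lam' + mu' = 1 ∧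
        (∃ x : 𝓞 K, (x : K) = lam') ∧
        (∃ u : (𝓞 K)ˣ, ((u : 𝓞 K) : K) = mu') ∧
        max |ordK P lam'| |ordK P mu'| = max |ordK P lam| |ordK P mu| := by
  intro lam mu hlam hmu hsum
  rcases ordK_cases_of_add_eq_one P hlam.1 hmu.1 hsum with
    ⟨hl, hm⟩ | ⟨hl, hm⟩ | ⟨hl, hm⟩
  · -- `(λ⁻¹, -μ/λ)` is the image of `(λ, μ)` under `λ ↦ 1/λ` of the `S₃`-action
    have hord : ordK P (-(mu * lam⁻¹)) = 0 := by
      rw [ordK_neg, ordK_mul P hmu.1 (inv_ne_zero hlam.1), ordK_inv, hm, add_neg_cancel]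
    have hmu' := (hmu.mul hlam.inv).neg
    refine ⟨lam⁻¹, -(mu * lam⁻¹), hlam.inv, hmu', ?_,
      hlam.inv.exists_integer (by rw [ordK_inv]; omega), hmu'.exists_unit hord, ?_⟩
    · field_simp [hlam.1]
      linear_combination -hsum
    · rw [ordK_inv, hord, hm, abs_neg, abs_zero, max_self]
      exact max_eq_left (abs_nonneg _)
  · exact ⟨lam, mu, hlam, hmu, hsum, hlam.exists_integer hl, hmu.exists_unit hm, rfl⟩
  · exact ⟨mu, lam, hmu, hlam, by rwa [add_comm], hmu.exists_integer hm, hlam.exists_unit hl,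
      max_comm _ _⟩

theorem S_unit_solution_normalisation_inert_or_totally_ramified
    (K : Type*) [Field K] [NumberField K]
    (P : HeightOneSpectrum (𝓞 K)) (hP2 : (2 : 𝓞 K) ∈ P.asIdeal)
    (hio : Ideal.span {(2 : 𝓞 K)} = P.asIdeal ∨
      Ideal.span {(2 : 𝓞 K)} = P.asIdeal ^ Module.finrank ℚ K) :
    ∀ lam mu : K, IsSUnit {P} lam → IsSUnit {P} mu → lam + mu = 1 →
      ∃ lam' mu' : K, IsSUnit {P} lam' ∧ IsSUnit {P} mu' ∧ lam' + mu' = 1 ∧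
        (∃ x : 𝓞 K, (x : K) = lam') ∧
        (∃ u : (𝓞 K)ˣ, ((u : 𝓞 K) : K) = mu') ∧
        max |ordK P lam'| |ordK P mu'| = max |ordK P lam| |ordK P mu| :=
  S_unit_solution_normalisation_inert_or_totally_ramified_general K P
end
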